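/- arXiv:2009.00527 — 2 statements merged into one kernel-verified Lean document; each statement's English description precedes it below -/
import Mathlib

section
/- For every a > 0, the sum over n ≥ 1 of (2n+1)/(1 + (n(n+1)/a)²)² is strictly less than a·π/4. -/
/-!
With `Φ x = arctan x + x / (1 + x²)` (`arctanAddDiv`) we have `Φ' = 2 / (1 + x²)²` and
`Φ → π / 2`, so `a / 2 * Φ` is a bounded primitive of `a / (1 + x²)²` whose total increase on
`[0, ∞)` is `a π / 4`. Substituting `x = ((n + 1)² - 1) / a`, the `n`-th term of the series is
strictly smaller than the increase of `a / 2 * Φ` between consecutive nodes, so the series is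
strictly smaller than the telescoping sum. The increment of `arctan` between the nodes is an
`arctan` of a single rational function, which the Padé bound `3x / (3 + x²) ≤ arctan x` turns
into a polynomial inequality with nonnegative coefficients.
-/

open Real

theorem tsum_lt_of_lt_sub_of_le {f g : ℕ → ℝ} {c : ℝ} (hf : ∀ n, 0 ≤ f n)
    (hfg : ∀ n, f n < g (n + 1) - g n) (hg0 : g 0 = 0) (hgc : ∀ n, g n ≤ c) :
    ∑' n, f n < c := by
  have hinc : ∀ n, 0 ≤ g (n + 1) - g n := fun n => (hf n).trans (hfg n).le
  have hpartial : ∀ N, ∑ n ∈ Finset.range N, (g (n + 1) - g n) ≤ c := by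
    intro N
    rw [Finset.sum_range_sub, hg0, sub_zero]
    exact hgc N
  calc ∑' n, f n < ∑' n, (g (n + 1) - g n) :=
        Summable.tsum_lt_tsum_of_nonneg (i := 0) hf (fun n => (hfg n).le) (hfg 0)
          (summable_of_sum_range_le hinc hpartial)
    _ ≤ c := Real.tsum_le_of_sum_range_le hinc hpartial

namespace Real

theorem arctan_sub_arctan {x y : ℝ} (h : -1 < x * y) :
    arctan x - arctan y = arctan ((x - y) / (1 + x * y)) := by
  rw [sub_eq_add_neg, ← arctan_neg, arctan_add (by linarith [neg_mul_eq_mul_neg x y])]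
  congr 2
  ring

theorem three_mul_div_three_add_sq_le_arctan {x : ℝ} (hx : 0 ≤ x) :
    3 * x / (3 + x ^ 2) ≤ arctan x := by
  let d : ℝ → ℝ := fun t => arctan t - 3 * t / (3 + t ^ 2)
  have hd : ∀ t, HasDerivAt d (1 / (1 + t ^ 2) - (3 * (3 + t ^ 2) - 3 * t * (2 * t)) /
      (3 + t ^ 2) ^ 2) t := by
    intro t
    have hnum : HasDerivAt (fun t : ℝ => 3 * t) 3 t := by
      simpa using (hasDerivAt_id t).const_mul 3
    have hden : HasDerivAt (fun t : ℝ => 3 + t ^ 2) (2 * t) t := by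
      simpa using (hasDerivAt_pow 2 t).const_add 3
    exact (hasDerivAt_arctan t).sub (hnum.div hden (by positivity))
  have hmono : Monotone d := by
    refine monotone_of_deriv_nonneg (fun t => (hd t).differentiableAt) fun t => ?_
    rw [(hd t).deriv, sub_nonneg, div_le_div_iff₀ (by positivity) (by positivity)]
    nlinarith [sq_nonneg (t ^ 2)]
  simpa [d] using hmono hx

end Real

noncomputable def arctanAddDiv (x : ℝ) : ℝ := arctan x + x / (1 + x ^ 2)

theorem arctanAddDiv_le_pi_div_two {x : ℝ} (hx : 0 ≤ x) : arctanAddDiv x ≤ π / 2 := by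
  rcases hx.eq_or_lt with rfl | hx
  · simp only [arctanAddDiv, arctan_zero, zero_div, add_zero]
    positivity
  have hpade := three_mul_div_three_add_sq_le_arctan (inv_nonneg.2 hx.le)
  rw [arctan_inv_of_pos hx] at hpade
  have hfrac : x / (1 + x ^ 2) ≤ 3 * x⁻¹ / (3 + x⁻¹ ^ 2) := by
    rw [div_le_div_iff₀ (by positivity) (by positivity)]
    field_simp
    nlinarith
  unfold arctanAddDiv
  linarith

theorem term_lt_pade_bound {a x : ℝ} (ha : 0 < a) (hx : 0 ≤ x) :
    let u := (x + 1) * (x + 1 + 2) / a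
    let v := x * (x + 2) / a
    let θ := (u - v) / (1 + u * v)
    (2 * (x + 1) + 1) / (1 + ((x + 1) * (x + 2) / a) ^ 2) ^ 2 <
      a / 2 * (3 * θ / (3 + θ ^ 2) + (u / (1 + u ^ 2) - v / (1 + v ^ 2))) := by
  intro u v θ
  -- so that `positivity` knows `x ≥ 0` after clearing denominators
  lift x to NNReal using hx
  simp only [u, v, θ]
  rw [← sub_pos]
  field_simp
  ring_nf
  positivity

theorem term_lt_arctanAddDiv_sub {a x : ℝ} (ha : 0 < a) (hx : 0 ≤ x) :
    (2 * (x + 1) + 1) / (1 + ((x + 1) * (x + 2) / a) ^ 2) ^ 2 <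
      a / 2 * (arctanAddDiv ((x + 1) * (x + 1 + 2) / a) - arctanAddDiv (x * (x + 2) / a)) := by
  set u := (x + 1) * (x + 1 + 2) / a
  set v := x * (x + 2) / a
  have huv : 0 ≤ u * v := by positivity
  have hθ : 0 ≤ (u - v) / (1 + u * v) := by
    refine div_nonneg (sub_nonneg.2 (div_le_div_of_nonneg_right ?_ ha.le)) (by positivity)
    nlinarith
  calc _ < a / 2 * (3 * ((u - v) / (1 + u * v)) / (3 + ((u - v) / (1 + u * v)) ^ 2)
          + (u / (1 + u ^ 2) - v / (1 + v ^ 2))) := term_lt_pade_bound ha hx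
    _ ≤ a / 2 * (arctan ((u - v) / (1 + u * v)) + (u / (1 + u ^ 2) - v / (1 + v ^ 2))) := by
        gcongr
        exact three_mul_div_three_add_sq_le_arctan hθ
    _ = _ := by
        rw [← arctan_sub_arctan (by linarith), arctanAddDiv, arctanAddDiv]
        ring

theorem stmt_2 (a : ℝ) (ha : 0 < a) :
    (∑' n : ℕ, (2 * ((n : ℝ) + 1) + 1) /
      (1 + (((n : ℝ) + 1) * ((n : ℝ) + 2) / a) ^ 2) ^ 2) < a * π / 4 := by
  refine tsum_lt_of_lt_sub_of_le (g := fun n : ℕ => a / 2 * arctanAddDiv (n * (n + 2) / a))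
    (fun n => by positivity) (fun n => ?_) (by simp [arctanAddDiv]) (fun n => ?_)
  · simpa [mul_sub] using term_lt_arctanAddDiv_sub ha n.cast_nonneg
  · calc a / 2 * arctanAddDiv (n * (n + 2) / a) ≤ a / 2 * (π / 2) := by
          gcongr
          exact arctanAddDiv_le_pi_div_two (by positivity)
      _ = a * π / 4 := by ring
end

section
/- Let G(ν) = ∑_{n=1}^∞ (2n+1) g(ν n(n+1)) with g(t) = 1/(1+t²)². Then ν·G(ν) → ∫₀^∞ g(t) dt = π/4 as ν → 0⁺. -/
/-!
Put nodes `ξₘ = ν m (m + 1)`, so that `ξₙ₊₁ - ξₙ = 2ν(n + 1)` and `ξₙ₊₂ - ξₙ₊₁ = 2ν(n + 2)`.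
Then `ν (2n + 3) g(ξₙ₊₁)` exceeds the right Riemann term `(ξₙ₊₁ - ξₙ) g(ξₙ₊₁)` by `ν g(ξₙ₊₁)` and
falls short of the left Riemann term `(ξₙ₊₂ - ξₙ₊₁) g(ξₙ₊₁)` by the same amount. As `g` decreases
on `[0, ∞)`, right sums lie below and left sums above `∫₀^∞ g = π / 4`, so `ν G(ν)` is within
`2ν + E(ν)` of `π / 4`, where `E(ν) = ν ∑ g(ξₙ₊₁) → 0` by dominated convergence, using
`ν g(ν a) ≤ 1 / a`.
-/

open Real MeasureTheory Filter Set Topology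

section RiemannSums

variable {f : ℝ → ℝ} {ξ : ℕ → ℝ}

theorem AntitoneOn.intervalIntegrable_of_le {a b : ℝ} (hf : AntitoneOn f (Icc a b))
    (hab : a ≤ b) : IntervalIntegrable f volume a b :=
  AntitoneOn.intervalIntegrable (by rwa [uIcc_of_le hab])

theorem AntitoneOn.sub_mul_le_intervalIntegral {a b : ℝ} (hf : AntitoneOn f (Icc a b))
    (hab : a ≤ b) : (b - a) * f b ≤ ∫ x in a..b, f x := by
  have h := intervalIntegral.integral_mono_on hab intervalIntegrable_const
    (hf.intervalIntegrable_of_le hab) fun x hx ↦ hf hx (right_mem_Icc.2 hab) hx.2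
  simpa [mul_comm] using h

theorem AntitoneOn.intervalIntegral_le_sub_mul {a b : ℝ} (hf : AntitoneOn f (Icc a b))
    (hab : a ≤ b) : ∫ x in a..b, f x ≤ (b - a) * f a := by
  have h := intervalIntegral.integral_mono_on hab (hf.intervalIntegrable_of_le hab)
    intervalIntegrable_const fun x hx ↦ hf (left_mem_Icc.2 hab) hx hx.1
  simpa [mul_comm] using h

theorem Monotone.Icc_subset_Ici_zero (hξ : Monotone ξ) (n : ℕ) :
    Icc (ξ n) (ξ (n + 1)) ⊆ Ici (ξ 0) :=
  Icc_subset_Ici_self.trans (Ici_subset_Ici.2 (hξ n.zero_le))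

theorem AntitoneOn.intervalIntegral_eq_sum (hf : AntitoneOn f (Ici (ξ 0)))
    (hξ : Monotone ξ) (N : ℕ) :
    ∫ x in ξ 0..ξ N, f x = ∑ n ∈ Finset.range N, ∫ x in ξ n..ξ (n + 1), f x :=
  (intervalIntegral.sum_integral_adjacent_intervals fun n _ ↦
    (hf.mono (hξ.Icc_subset_Ici_zero n)).intervalIntegrable_of_le (hξ n.le_succ)).symm

theorem AntitoneOn.sum_sub_mul_le_intervalIntegral (hf : AntitoneOn f (Ici (ξ 0)))
    (hξ : Monotone ξ) (N : ℕ) :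
    ∑ n ∈ Finset.range N, (ξ (n + 1) - ξ n) * f (ξ (n + 1)) ≤ ∫ x in ξ 0..ξ N, f x := by
  rw [hf.intervalIntegral_eq_sum hξ]
  exact Finset.sum_le_sum fun n _ ↦
    (hf.mono (hξ.Icc_subset_Ici_zero n)).sub_mul_le_intervalIntegral (hξ n.le_succ)

theorem AntitoneOn.intervalIntegral_le_sum_sub_mul (hf : AntitoneOn f (Ici (ξ 0)))
    (hξ : Monotone ξ) (N : ℕ) :
    ∫ x in ξ 0..ξ N, f x ≤ ∑ n ∈ Finset.range N, (ξ (n + 1) - ξ n) * f (ξ n) := by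
  rw [hf.intervalIntegral_eq_sum hξ]
  exact Finset.sum_le_sum fun n _ ↦
    (hf.mono (hξ.Icc_subset_Ici_zero n)).intervalIntegral_le_sub_mul (hξ n.le_succ)

theorem AntitoneOn.tsum_sub_mul_le_integral_Ioi (hf : AntitoneOn f (Ici (ξ 0)))
    (hf₀ : ∀ x ∈ Ici (ξ 0), 0 ≤ f x) (hfi : IntegrableOn f (Ioi (ξ 0))) (hξ : Monotone ξ) :
    Summable (fun n ↦ (ξ (n + 1) - ξ n) * f (ξ (n + 1))) ∧
      ∑' n, (ξ (n + 1) - ξ n) * f (ξ (n + 1)) ≤ ∫ x in Ioi (ξ 0), f x := by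
  have hterm (n : ℕ) : 0 ≤ (ξ (n + 1) - ξ n) * f (ξ (n + 1)) :=
    mul_nonneg (sub_nonneg.2 (hξ n.le_succ)) (hf₀ _ (hξ (n + 1).zero_le))
  have hpartial (N : ℕ) :
      ∑ n ∈ Finset.range N, (ξ (n + 1) - ξ n) * f (ξ (n + 1)) ≤ ∫ x in Ioi (ξ 0), f x := by
    refine (hf.sum_sub_mul_le_intervalIntegral hξ N).trans ?_
    rw [intervalIntegral.integral_of_le (hξ N.zero_le)]
    exact setIntegral_mono_set hfi ((ae_restrict_iff' measurableSet_Ioi).2 <|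
      .of_forall fun x hx ↦ hf₀ x (Ioi_subset_Ici_self hx)) Ioc_subset_Ioi_self.eventuallyLE
  exact ⟨summable_of_sum_range_le hterm hpartial, Real.tsum_le_of_sum_range_le hterm hpartial⟩

theorem AntitoneOn.integral_Ioi_le_tsum_sub_mul (hf : AntitoneOn f (Ici (ξ 0)))
    (hf₀ : ∀ x ∈ Ici (ξ 0), 0 ≤ f x) (hfi : IntegrableOn f (Ioi (ξ 0))) (hξ : Monotone ξ)
    (hξ_top : Tendsto ξ atTop atTop) (hs : Summable fun n ↦ (ξ (n + 1) - ξ n) * f (ξ n)) :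
    ∫ x in Ioi (ξ 0), f x ≤ ∑' n, (ξ (n + 1) - ξ n) * f (ξ n) :=
  le_of_tendsto' (intervalIntegral_tendsto_integral_Ioi _ hfi hξ_top) fun N ↦
    (hf.intervalIntegral_le_sum_sub_mul hξ N).trans <| hs.sum_le_tsum _ fun n _ ↦
      mul_nonneg (sub_nonneg.2 (hξ n.le_succ)) (hf₀ _ (hξ n.zero_le))

end RiemannSums

theorem tendsto_div_one_add_sq_atTop : Tendsto (fun t : ℝ ↦ t / (1 + t ^ 2)) atTop (𝓝 0) := by
  refine tendsto_of_tendsto_of_tendsto_of_le_of_le' tendsto_const_nhds tendsto_inv_atTop_zero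
    ?_ ?_ <;> filter_upwards [eventually_gt_atTop 0] with t ht
  · positivity
  · rw [div_le_iff₀ (by positivity), inv_mul_eq_div, le_div_iff₀ ht]
    nlinarith

noncomputable def invOneAddSqSq (t : ℝ) : ℝ := 1 / (1 + t ^ 2) ^ 2

namespace invOneAddSqSq

theorem continuous : Continuous invOneAddSqSq :=
  continuous_const.div (by fun_prop) fun t ↦ by positivity

theorem nonneg (t : ℝ) : 0 ≤ invOneAddSqSq t := by
  unfold invOneAddSqSq; positivity

@[simp] theorem zero : invOneAddSqSq 0 = 1 := by simp [invOneAddSqSq]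

theorem antitoneOn : AntitoneOn invOneAddSqSq (Ici 0) := fun a ha b _ hab ↦ by
  unfold invOneAddSqSq
  gcongr

theorem le_one_div {t : ℝ} (ht : 0 < t) : invOneAddSqSq t ≤ 1 / t := by
  unfold invOneAddSqSq
  gcongr
  nlinarith [sq_nonneg (t - 1), sq_nonneg t]

theorem mul_le_one_div {ν a : ℝ} (hν : 0 < ν) (ha : 0 < a) :
    ν * invOneAddSqSq (ν * a) ≤ 1 / a := by
  calc ν * invOneAddSqSq (ν * a) ≤ ν * (1 / (ν * a)) :=
        mul_le_mul_of_nonneg_left (le_one_div (by positivity)) hν.le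
    _ = 1 / a := by field_simp

theorem le_inv_one_add_sq (t : ℝ) : invOneAddSqSq t ≤ (1 + t ^ 2)⁻¹ := by
  rw [invOneAddSqSq, one_div]
  gcongr
  exact le_self_pow₀ (by nlinarith [sq_nonneg t]) two_ne_zero

theorem integrable : Integrable invOneAddSqSq :=
  integrable_inv_one_add_sq.mono' continuous.aestronglyMeasurable <|
    .of_forall fun t ↦ by rw [norm_of_nonneg (nonneg t)]; exact le_inv_one_add_sq t

theorem hasDerivAt (x : ℝ) :
    HasDerivAt (fun t ↦ (t / (1 + t ^ 2) + arctan t) / 2) (invOneAddSqSq x) x := by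
  have hx : 1 + x ^ 2 ≠ 0 := by positivity
  have h := (((hasDerivAt_id x).div ((hasDerivAt_pow 2 x).const_add 1) hx).add
    (hasDerivAt_arctan x)).div_const 2
  refine h.congr_deriv ?_
  simp only [invOneAddSqSq, id]
  field_simp
  ring

theorem integral_Ioi_zero : ∫ t in Ioi (0 : ℝ), invOneAddSqSq t = π / 4 := by
  have hlim : Tendsto (fun t ↦ (t / (1 + t ^ 2) + arctan t) / 2) atTop (𝓝 (π / 4)) := by
    have := (tendsto_div_one_add_sq_atTop.add
      (tendsto_arctan_atTop.mono_right nhdsWithin_le_nhds)).div_const 2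
    rwa [zero_add, div_div, show (2 : ℝ) * 2 = 4 by norm_num] at this
  rw [integral_Ioi_of_hasDerivAt_of_tendsto' (fun x _ ↦ hasDerivAt x) integrable.integrableOn
    hlim]
  simp

end invOneAddSqSq

noncomputable def nodes (ν : ℝ) (m : ℕ) : ℝ := ν * (m * (m + 1))

theorem nodes_zero (ν : ℝ) : nodes ν 0 = 0 := by simp [nodes]

theorem nodes_succ (ν : ℝ) (n : ℕ) :
    nodes ν (n + 1) = ν * (((n : ℝ) + 1) * ((n : ℝ) + 2)) := by
  simp only [nodes]; push_cast; ring

theorem nodes_succ_sub (ν : ℝ) (n : ℕ) :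
    nodes ν (n + 1) - nodes ν n = ν * (2 * ((n : ℝ) + 1)) := by
  simp only [nodes]; push_cast; ring

theorem nodes_succ_succ_sub (ν : ℝ) (n : ℕ) :
    nodes ν (n + 2) - nodes ν (n + 1) = nodes ν (n + 1) - nodes ν n + 2 * ν := by
  rw [nodes_succ_sub, nodes_succ_sub]; push_cast; ring

theorem monotone_nodes {ν : ℝ} (hν : 0 ≤ ν) : Monotone (nodes ν) :=
  monotone_nat_of_le_succ fun n ↦ by
    rw [← sub_nonneg, nodes_succ_sub]; positivity

theorem tendsto_nodes_atTop {ν : ℝ} (hν : 0 < ν) : Tendsto (nodes ν) atTop atTop := by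
  refine tendsto_atTop_mono (fun m ↦ ?_) (tendsto_natCast_atTop_atTop.const_mul_atTop hν)
  simp only [nodes]
  gcongr
  nlinarith [m.cast_nonneg (α := ℝ)]

theorem summable_one_div_succ_mul_succ_succ :
    Summable fun n : ℕ ↦ 1 / (((n : ℝ) + 1) * ((n : ℝ) + 2)) := by
  have h := (summable_nat_add_iff 1).2 (Real.summable_one_div_nat_pow.2 one_lt_two)
  refine h.of_nonneg_of_le (fun n ↦ by positivity) fun n ↦ ?_
  push_cast
  gcongr; linarith

open invOneAddSqSq

theorem tendsto_mul_tsum_invOneAddSqSq_nodes :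
    Tendsto (fun ν ↦ ν * ∑' n, invOneAddSqSq (nodes ν (n + 1))) (𝓝[>] 0) (𝓝 0) := by
  simp_rw [nodes_succ, ← tsum_mul_left]
  have hlim (n : ℕ) : Tendsto (fun ν ↦ ν * invOneAddSqSq (ν * (((n : ℝ) + 1) * ((n : ℝ) + 2))))
      (𝓝[>] 0) (𝓝 0) := by
    have hcont : Continuous fun ν ↦ ν * invOneAddSqSq (ν * (((n : ℝ) + 1) * ((n : ℝ) + 2))) :=
      continuous_id.mul (continuous.comp (continuous_id.mul continuous_const))
    simpa using (hcont.tendsto 0).mono_left nhdsWithin_le_nhds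
  simpa using tendsto_tsum_of_dominated_convergence summable_one_div_succ_mul_succ_succ hlim <|
    eventually_mem_nhdsWithin.mono fun ν hν n ↦ by
      rw [norm_of_nonneg (mul_nonneg hν.le (nonneg _))]
      exact mul_le_one_div hν (by positivity)

section Bounds

variable {ν : ℝ} (hν : 0 < ν)
include hν

theorem summable_invOneAddSqSq_nodes : Summable fun n ↦ invOneAddSqSq (nodes ν (n + 1)) := by
  refine (summable_one_div_succ_mul_succ_succ.mul_left ν⁻¹).of_nonneg_of_le (fun n ↦ nonneg _)
    fun n ↦ ?_
  rw [nodes_succ]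
  exact (le_one_div (by positivity)).trans_eq (by field_simp)

theorem summable_nodes_sub_mul :
    Summable fun n ↦ (nodes ν (n + 1) - nodes ν n) * invOneAddSqSq (nodes ν (n + 1)) :=
  (AntitoneOn.tsum_sub_mul_le_integral_Ioi (ξ := nodes ν)
    (by rw [nodes_zero]; exact antitoneOn) (fun x _ ↦ nonneg x)
    (by rw [nodes_zero]; exact integrable.integrableOn) (monotone_nodes hν.le)).1

theorem tsum_nodes_sub_mul_le :
    ∑' n, (nodes ν (n + 1) - nodes ν n) * invOneAddSqSq (nodes ν (n + 1)) ≤ π / 4 := by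
  have h := (AntitoneOn.tsum_sub_mul_le_integral_Ioi (ξ := nodes ν)
    (by rw [nodes_zero]; exact antitoneOn) (fun x _ ↦ nonneg x)
    (by rw [nodes_zero]; exact integrable.integrableOn) (monotone_nodes hν.le)).2
  rwa [nodes_zero, integral_Ioi_zero] at h

theorem mul_tsum_eq :
    ν * ∑' n : ℕ, (2 * ((n : ℝ) + 1) + 1) * invOneAddSqSq (nodes ν (n + 1)) =
      ∑' n, (nodes ν (n + 1) - nodes ν n) * invOneAddSqSq (nodes ν (n + 1)) +
        ν * ∑' n, invOneAddSqSq (nodes ν (n + 1)) := by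
  rw [← tsum_mul_left, ← tsum_mul_left, ← (summable_nodes_sub_mul hν).tsum_add
    ((summable_invOneAddSqSq_nodes hν).mul_left ν)]
  congr 1 with n
  rw [nodes_succ_sub]
  ring

theorem pi_div_four_le :
    π / 4 ≤ 2 * ν + ∑' n, (nodes ν (n + 1) - nodes ν n) * invOneAddSqSq (nodes ν (n + 1)) +
      2 * ν * ∑' n, invOneAddSqSq (nodes ν (n + 1)) := by
  have hshift (n : ℕ) :
      (nodes ν (n + 1 + 1) - nodes ν (n + 1)) * invOneAddSqSq (nodes ν (n + 1)) =
        (nodes ν (n + 1) - nodes ν n) * invOneAddSqSq (nodes ν (n + 1)) +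
          2 * ν * invOneAddSqSq (nodes ν (n + 1)) := by
    rw [nodes_succ_succ_sub]; ring
  have hs : Summable fun m ↦ (nodes ν (m + 1) - nodes ν m) * invOneAddSqSq (nodes ν m) := by
    refine (summable_nat_add_iff 1).1 ?_
    simpa only [hshift] using
      (summable_nodes_sub_mul hν).add ((summable_invOneAddSqSq_nodes hν).mul_left (2 * ν))
  have h := AntitoneOn.integral_Ioi_le_tsum_sub_mul (ξ := nodes ν)
    (by rw [nodes_zero]; exact antitoneOn) (fun x _ ↦ nonneg x)
    (by rw [nodes_zero]; exact integrable.integrableOn) (monotone_nodes hν.le)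
    (tendsto_nodes_atTop hν) hs
  have hfirst : (nodes ν (0 + 1) - nodes ν 0) * invOneAddSqSq (nodes ν 0) = 2 * ν := by
    rw [nodes_succ_sub, nodes_zero, zero]; push_cast; ring
  rwa [hs.tsum_eq_zero_add, hfirst, funext hshift, (summable_nodes_sub_mul hν).tsum_add
    ((summable_invOneAddSqSq_nodes hν).mul_left _), tsum_mul_left, nodes_zero,
    integral_Ioi_zero, ← add_assoc] at h

end Bounds

theorem stmt_12 (g : ℝ → ℝ) (hg : ∀ t, g t = 1 / (1 + t ^ 2) ^ 2) :
    (∫ t in Set.Ioi (0:ℝ), g t = π / 4) ∧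
    Filter.Tendsto
      (fun ν : ℝ => ν * ∑' n : ℕ, (2 * ((n : ℝ) + 1) + 1) *
        g (ν * (((n : ℝ) + 1) * ((n : ℝ) + 2))))
      (nhdsWithin 0 (Set.Ioi 0)) (nhds (π / 4)) := by
  obtain rfl : g = invOneAddSqSq := funext hg
  refine ⟨integral_Ioi_zero, ?_⟩
  simp only [← nodes_succ]
  have hE := tendsto_mul_tsum_invOneAddSqSq_nodes
  have hid : Tendsto (fun ν : ℝ ↦ ν) (𝓝[>] 0) (𝓝 0) := nhdsWithin_le_nhds
  have hlower := ((tendsto_const_nhds (x := π / 4)).sub (hid.const_mul 2)).sub hE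
  have hupper := (tendsto_const_nhds (x := π / 4)).add hE
  simp only [mul_zero, sub_zero, add_zero] at hlower hupper
  refine tendsto_of_tendsto_of_tendsto_of_le_of_le' hlower hupper ?_ ?_ <;>
    filter_upwards [self_mem_nhdsWithin] with ν hν
  · linarith [mul_tsum_eq hν, pi_div_four_le hν]
  · linarith [mul_tsum_eq hν, tsum_nodes_sub_mul_le hν]
end
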